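/- Let m ≥ 5 be odd and let q_1 ≥ q_2 ≥ ⋯ ≥ q_m with q_i ∈ ((√5 − 1)/2, 1/√2) for all i. Then Δ_{1:m} < Δ_{1:m−2}, where Δ_{1:k} = 2 − q_1 q_2 + Σ_{j=1}^{k−2} (−1)^j q_1⋯q_j (2 − q_{j+1} q_{j+2}) + (−1)^{k−1} q_1⋯q_{k−1}. -/
import Mathlib


/-- The closed-form expression
`Δ_{1:k} = 2 - q₁ q₂ + ∑_{j=1}^{k-2} (-1)^j q_1⋯q_j (2 - q_{j+1} q_{j+2})
  + (-1)^{k-1} q_1⋯q_{k-1}`. -/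
noncomputable def deltaOne (q : ℕ → ℝ) (k : ℕ) : ℝ :=
  2 - q 1 * q 2
    + ∑ j ∈ Finset.Icc 1 (k - 2),
        (-1 : ℝ) ^ j * (∏ i ∈ Finset.Icc 1 j, q i) * (2 - q (j + 1) * q (j + 2))
    + (-1 : ℝ) ^ (k - 1) * ∏ i ∈ Finset.Icc 1 (k - 1), q i

/-- For odd `m ≥ 5` and `q 1 ≥ ⋯ ≥ q m` with all
`q i ∈ ((√5 - 1)/2, 1/√2)`, one has `Δ_{1:m} < Δ_{1:m-2}`. -/
theorem deltaOne_lt_of_odd (m : ℕ) (hm : 5 ≤ m) (hmo : Odd m) (q : ℕ → ℝ)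
    (hmono : ∀ i j, 1 ≤ i → i ≤ j → j ≤ m → q j ≤ q i)
    (hq : ∀ i, 1 ≤ i → i ≤ m →
      q i ∈ Set.Ioo ((Real.sqrt 5 - 1) / 2) (1 / Real.sqrt 2)) :
    deltaOne q m < deltaOne q (m - 2) := by
  obtain ⟨n, rfl⟩ : ∃ n, m = n + 5 := ⟨m - 5, by omega⟩
  have hne : Even n := by
    rcases hmo with ⟨t, ht⟩
    exact ⟨t - 2, by omega⟩
  -- basic real facts
  have h5 : Real.sqrt 5 ^ 2 = 5 := Real.sq_sqrt (by norm_num)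
  have h5' : 2 < Real.sqrt 5 := by nlinarith [Real.sqrt_nonneg 5]
  have h2 : Real.sqrt 2 ^ 2 = 2 := Real.sq_sqrt (by norm_num)
  have h2' : 1 < Real.sqrt 2 := by nlinarith [Real.sqrt_nonneg 2]
  set A := q (n + 3) with hAdef
  set B := q (n + 4) with hBdef
  set C := q (n + 5) with hCdef
  have hqA := hq (n + 3) (by omega) (by omega)
  have hqB := hq (n + 4) (by omega) (by omega)
  have hqC := hq (n + 5) (by omega) (by omega)
  have hA1 : (Real.sqrt 5 - 1) / 2 < A := hqA.1
  have hA2 : A < 1 / Real.sqrt 2 := hqA.2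
  have hA0 : 0 < A := by nlinarith
  have hB0 : 0 < B := by nlinarith [hqB.1]
  have hC0 : 0 < C := by nlinarith [hqC.1]
  have hBA : B ≤ A := hmono (n + 3) (n + 4) (by omega) (by omega) (by omega)
  have hCA : C ≤ A := hmono (n + 3) (n + 5) (by omega) (by omega) (by omega)
  have hAlt1 : A < 1 := by
    have : 1 / Real.sqrt 2 < 1 := by
      rw [div_lt_one (by positivity)]; exact h2'
    linarith
  have hquad : 0 < A ^ 2 + A - 1 := by nlinarith
  have hBC : B * C ≤ A * A := mul_le_mul hBA hCA hC0.le hA0.le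
  have hbr : 1 - 2 * A + A * (B * C) < 0 := by
    have h1 : A * (B * C) ≤ A * (A * A) := mul_le_mul_of_nonneg_left hBC hA0.le
    nlinarith [mul_pos (by linarith : (0:ℝ) < 1 - A) hquad]
  have hP : 0 < ∏ i ∈ Finset.Icc 1 (n + 2), q i := by
    apply Finset.prod_pos
    intro i hi
    simp only [Finset.mem_Icc] at hi
    have := (hq i (by omega) (by omega)).1
    nlinarith
  set P := ∏ i ∈ Finset.Icc 1 (n + 2), q i with hPdef
  have hs : (-1 : ℝ) ^ n = 1 := hne.neg_one_pow
  have hEq : deltaOne q (n + 5) - deltaOne q (n + 3) = P * (1 - 2 * A + A * (B * C)) := by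
    show deltaOne q (n + 5) - deltaOne q (n + 3) = _
    unfold deltaOne
    rw [show n + 5 - 2 = n + 3 from rfl, show n + 5 - 1 = n + 4 from rfl,
        show n + 3 - 2 = n + 1 from rfl, show n + 3 - 1 = n + 2 from rfl]
    rw [show Finset.Icc 1 (n + 3) = Finset.Icc 1 (n + 2 + 1) from rfl,
        Finset.sum_Icc_succ_top (by omega : 1 ≤ n + 2 + 1),
        show Finset.Icc 1 (n + 2) = Finset.Icc 1 (n + 1 + 1) from rfl,
        Finset.sum_Icc_succ_top (by omega : 1 ≤ n + 1 + 1)]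
    rw [show Finset.Icc 1 (n + 4) = Finset.Icc 1 (n + 3 + 1) from rfl,
        Finset.prod_Icc_succ_top (by omega : 1 ≤ n + 3 + 1),
        show Finset.Icc 1 (n + 3) = Finset.Icc 1 (n + 2 + 1) from rfl,
        Finset.prod_Icc_succ_top (by omega : 1 ≤ n + 2 + 1)]
    have e2 : (-1 : ℝ) ^ (n + 2) = 1 := by rw [pow_add, hs]; norm_num
    have e3 : (-1 : ℝ) ^ (n + 3) = -1 := by rw [pow_add, hs]; norm_num
    have e4 : (-1 : ℝ) ^ (n + 4) = 1 := by rw [pow_add, hs]; norm_num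
    rw [show n + 2 + 1 = n + 3 from rfl, show n + 1 + 1 = n + 2 from rfl]
    rw [e2, e3, e4]
    rw [← hPdef]
    rw [show n + 2 + 1 + 1 = n + 4 from rfl, show n + 2 + 1 + 2 = n + 5 from rfl,
        show n + 2 + 2 = n + 4 from rfl, show n + 2 + 1 = n + 3 from rfl,
        ← hAdef, ← hBdef, ← hCdef]
    ring
  have key : P * (1 - 2 * A + A * (B * C)) < 0 := mul_neg_of_pos_of_neg hP hbr
  have : deltaOne q (n + 5 - 2) = deltaOne q (n + 3) := rfl
  rw [this]
  linarith
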